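/- For every integer g ≥ 0, the maximum of the quantity E - V + 1 over all triples (k₀,k₁,k₂) of natural numbers with k₀ ≥ 1, k₂ ≥ 1, k₀ - k₁ + k₂ = 2 - g, V = k₀ + k₁ + k₂ and 2E ≤ k₀ + 3k₁ + k₂ is at most ⌊g/2⌋; and this bound is attained when 2E = k₀ + 3k₁ + k₂ - (g mod 2) appropriately, i.e. there exist admissible (k₀,k₁,k₂,E) with E - V + 1 = ⌊g/2⌋. -/

import Mathlib

/-! Halving the degree-sum bound and substituting the Morse equality gives
`2 (E - V + 1) ≤ k₁ - k₀ - k₂ + 2 = g`. One minimum, one maximum and `g` saddles, with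
`E = g + 1 + ⌊g/2⌋` edges, attain the bound. -/

theorem two_mul_cycles_le_of_degree_sum (k₀ k₁ k₂ E : ℕ) (hE : 2 * E ≤ k₀ + 3 * k₁ + k₂) :
    2 * ((E : ℤ) - (k₀ + k₁ + k₂) + 1) ≤ (k₁ : ℤ) - k₀ - k₂ + 2 := by
  omega

/-- the Reeb number of the non-orientable surface S_g is ⌊g/2⌋:
over all (k₀,k₁,k₂,V,E) with k₀,k₂ ≥ 1, k₀ - k₁ + k₂ = 2 - g, V = k₀+k₁+k₂ and
2E ≤ k₀+3k₁+k₂, the quantity E - V + 1 is at most ⌊g/2⌋, and this bound is attained. -/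
theorem reeb_number_nonorientable (g : ℕ) :
    (∀ k₀ k₁ k₂ V E : ℕ, 1 ≤ k₀ → 1 ≤ k₂ →
      (k₀ : ℤ) - k₁ + k₂ = 2 - g → V = k₀ + k₁ + k₂ → 2 * E ≤ k₀ + 3 * k₁ + k₂ →
      (E : ℤ) - V + 1 ≤ (g / 2 : ℕ))
    ∧ (∃ k₀ k₁ k₂ V E : ℕ, 1 ≤ k₀ ∧ 1 ≤ k₂ ∧
      (k₀ : ℤ) - k₁ + k₂ = 2 - g ∧ V = k₀ + k₁ + k₂ ∧ 2 * E ≤ k₀ + 3 * k₁ + k₂ ∧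
      (E : ℤ) - V + 1 = (g / 2 : ℕ)) := by
  constructor
  · intro k₀ k₁ k₂ V E _ _ hχ hV hE
    have hcycles := two_mul_cycles_le_of_degree_sum k₀ k₁ k₂ E hE
    subst hV
    push_cast at hcycles ⊢
    omega
  · refine ⟨1, g, 1, 1 + g + 1, g + 1 + g / 2, le_rfl, le_rfl, ?_, rfl, ?_, ?_⟩ <;> push_cast <;> omega
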